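/- arXiv:1707.03639 — 5 statements merged into one kernel-verified Lean document; each statement's English description precedes it below -/
import Mathlib

section
/- Let S be a sequence over the cyclic group C_n with |S| = kn + n − 1, where k, n are positive integers. Then S contains a product-one (zero-sum) subsequence T with |T| = kn. -/
/-! Apply the Erdős–Ginzburg–Ziv theorem repeatedly: as long as a block is still missing, at least
`2n - 1` terms remain, so another zero-sum block of `n` terms can be removed. -/

theorem ZMod.exists_le_card_eq_mul_sum_eq_zero {n : ℕ} (k : ℕ) (s : Multiset (ZMod n))
    (hs : k * n + n - 1 ≤ Multiset.card s) :
    ∃ t ≤ s, Multiset.card t = k * n ∧ t.sum = 0 := by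
  induction k generalizing s with
  | zero => exact ⟨0, Multiset.zero_le s, by simp, Multiset.sum_zero⟩
  | succ k ih =>
    rw [add_one_mul] at hs ⊢
    obtain ⟨b, hbs, hb_card, hb_sum⟩ := ZMod.erdos_ginzburg_ziv_multiset s (by omega)
    obtain ⟨t, hts, ht_card, ht_sum⟩ := ih (s - b) (by rw [Multiset.card_sub hbs]; omega)
    refine ⟨t + b, ?_, by rw [Multiset.card_add, ht_card, hb_card], by
      rw [Multiset.sum_add, ht_sum, hb_sum, add_zero]⟩
    calc t + b ≤ s - b + b := add_le_add_left hts b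
      _ = s := tsub_add_cancel_of_le hbs

theorem zero_sum_subseq_of_length_kn_general {n k : ℕ}
    (S : Multiset (ZMod n)) (hS : Multiset.card S = k * n + n - 1) :
    ∃ T ≤ S, Multiset.card T = k * n ∧ T.sum = 0 :=
  ZMod.exists_le_card_eq_mul_sum_eq_zero k S hS.ge

/-- Every sequence over `C_n` of length `kn + n − 1` contains a zero-sum
subsequence of length `kn`. -/
theorem zero_sum_subseq_of_length_kn {n k : ℕ} (hn : 0 < n) (hk : 0 < k)
    (S : Multiset (ZMod n)) (hS : Multiset.card S = k * n + n - 1) :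
    ∃ T ≤ S, Multiset.card T = k * n ∧ T.sum = 0 :=
  zero_sum_subseq_of_length_kn_general S hS
end

section
/- Let m be a positive integer whose largest prime divisor is p, and let G = C_m ⋉_φ C_m be a semidirect product generated by x, y with ord(x) = ord(y) = m, ⟨x⟩ ∩ ⟨y⟩ = {1}, and yxy⁻¹ = x^s for some s coprime to m. Then N = ⟨x^{m/p}, y^{m/p}⟩ is a normal subgroup of G isomorphic to C_p × C_p, and G/N ≅ C_{m/p} ⋉_φ C_{m/p}. -/
/-!
Conjugation by `y` acts on `⟨x⟩` as `x ↦ x ^ s`, so `y ^ m = 1` gives `s ^ m ≡ 1 (mod m)`.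
Write `m = p * n`. By Fermat, `s ^ n ≡ s ^ (p * n) ≡ 1 (mod p)`, so `x ^ n` and `y ^ n` commute.
Since no prime factor of `n` exceeds `p`, `gcd (p * n) (φ n)` divides `n`, whence
`s ^ n ≡ 1 (mod n)`; this is what makes `N = ⟨x ^ n, y ^ n⟩` normal. As `⟨x⟩ ∩ ⟨y⟩ = 1`,
`N = ⟨x ^ n⟩ × ⟨y ^ n⟩ ≅ C_p × C_p`, and `x ^ i * y ^ j ∈ N` forces `n ∣ i`: this gives the
orders of the images of `x` and `y` in `G ⧸ N` and shows that their cyclic subgroups still meet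
trivially.
-/

theorem Nat.gcd_mul_totient_dvd {p n : ℕ} (hp : p.Prime) (hn : ∀ q ∈ n.primeFactors, q ≤ p) :
    Nat.gcd (p * n) n.totient ∣ n := by
  have hcop : p.Coprime (∏ q ∈ n.primeFactors, (q - 1)) := by
    refine Nat.Coprime.prod_right fun q hq => ?_
    have hq2 := (Nat.prime_of_mem_primeFactors hq).two_le
    exact Nat.coprime_of_lt_prime (by omega) (by have := hn q hq; omega) hp
  have htot : n.totient ∣ n * ∏ q ∈ n.primeFactors, (q - 1) :=
    Dvd.intro _ (Nat.totient_mul_prod_primeFactors n)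
  calc Nat.gcd (p * n) n.totient
      ∣ Nat.gcd (n * p) (n * ∏ q ∈ n.primeFactors, (q - 1)) := by
        rw [mul_comm p]; exact Nat.gcd_dvd_gcd_of_dvd_right _ htot
    _ = n := by rw [Nat.gcd_mul_left, hcop, mul_one]

theorem Nat.pow_modEq_one_of_pow_prime_mul_modEq_one {p n s : ℕ} (hp : p.Prime)
    (hn : ∀ q ∈ n.primeFactors, q ≤ p) (hs : s.Coprime n) (h : s ^ (p * n) ≡ 1 [MOD n]) :
    s ^ n ≡ 1 [MOD n] := by
  rw [← ZMod.natCast_eq_natCast_iff] at h ⊢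
  push_cast at h ⊢
  have htot : (s : ZMod n) ^ n.totient = 1 := by
    rw [← Nat.cast_pow, ← Nat.cast_one, ZMod.natCast_eq_natCast_iff]
    exact Nat.ModEq.pow_totient hs
  exact orderOf_dvd_iff_pow_eq_one.mp <|
    (orderOf_dvd_of_pow_eq_one (pow_gcd_eq_one.mpr ⟨h, htot⟩)).trans (Nat.gcd_mul_totient_dvd hp hn)

theorem Nat.pow_prime_mul_modEq_pow {p : ℕ} (hp : p.Prime) (s n : ℕ) :
    s ^ (p * n) ≡ s ^ n [MOD p] := by
  have := Fact.mk hp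
  rw [← ZMod.natCast_eq_natCast_iff]
  push_cast
  rw [pow_mul, ZMod.pow_card]

open Subgroup

section
variable {G : Type*} [Group G]

theorem conj_pow_zpow_of_conj_eq_pow {x y : G} {s : ℕ} (h : y * x * y⁻¹ = x ^ s) (b : ℕ) (c : ℤ) :
    y ^ b * x ^ c * (y ^ b)⁻¹ = x ^ ((s ^ b : ℕ) * c) := by
  have hx : y ^ b * x * (y ^ b)⁻¹ = x ^ s ^ b := by
    induction b with
    | zero => simp
    | succ b ih =>
      calc y ^ (b + 1) * x * (y ^ (b + 1))⁻¹ = y * (y ^ b * x * (y ^ b)⁻¹) * y⁻¹ := by group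
        _ = x ^ s ^ (b + 1) := by rw [ih, ← conj_pow, h, ← pow_mul, pow_succ']
  rw [← conj_zpow, hx, zpow_mul, zpow_natCast]

theorem pow_modEq_one_of_conj_eq_pow {x y : G} {s k : ℕ} (h : y * x * y⁻¹ = x ^ s)
    (hy : y ^ k = 1) : s ^ k ≡ 1 [MOD orderOf x] := by
  have := conj_pow_zpow_of_conj_eq_pow h k 1
  rw [hy, one_mul, inv_one, mul_one, mul_one, zpow_one, zpow_natCast] at this
  exact (pow_eq_pow_iff_modEq.mp ((pow_one x).trans this)).symm

theorem commute_pow_pow_of_conj_eq_pow {x y : G} {p n s : ℕ} (h : y * x * y⁻¹ = x ^ s)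
    (hx : orderOf x = p * n) (hs : s ^ n ≡ 1 [MOD p]) : Commute (x ^ n) (y ^ n) := by
  have hmod : s ^ n * n ≡ n [MOD orderOf x] := by
    rw [hx]; simpa using hs.mul_right' n
  have hconj := conj_pow_zpow_of_conj_eq_pow h n n
  rw [← Nat.cast_mul, zpow_natCast, zpow_natCast, pow_eq_pow_iff_modEq.mpr hmod] at hconj
  exact (mul_inv_eq_iff_eq_mul.mp hconj).symm

theorem Subgroup.normal_closure_of_conj_mem {S T : Set G} (hS : ∀ g ∈ S, IsOfFinOrder g)
    (hgen : closure S = ⊤) (hconj : ∀ g ∈ S, ∀ t ∈ T, g * t * g⁻¹ ∈ closure T) :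
    (closure T).Normal := by
  let M : Submonoid G :=
    { carrier := {g | closure T ≤ (closure T).comap (MulAut.conj g).toMonoidHom}
      one_mem' := fun t ht => by simpa using ht
      mul_mem' := fun {g h} hg hh t ht => by
        simpa [mul_assoc] using hg (hh ht) }
  have hM : Submonoid.closure S ≤ M :=
    Submonoid.closure_le.mpr fun g hg => (closure_le _).mpr (hconj g hg)
  rw [← closure_toSubmonoid_of_isOfFinOrder hS, hgen] at hM
  exact ⟨fun t ht g => hM (mem_top g) ht⟩

theorem Subgroup.mem_sup_iff_of_commute {A B : Subgroup G}
    (hAB : ∀ a ∈ A, ∀ b ∈ B, Commute a b) {z : G} :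
    z ∈ A ⊔ B ↔ ∃ a ∈ A, ∃ b ∈ B, a * b = z := by
  have hrange := MonoidHom.noncommCoprod_range A.subtype B.subtype fun a b => hAB a a.2 b b.2
  rw [A.range_subtype, B.range_subtype] at hrange
  rw [← hrange]
  constructor
  · rintro ⟨⟨a, b⟩, rfl⟩
    exact ⟨a, a.2, b, b.2, rfl⟩
  · rintro ⟨a, ha, b, hb, rfl⟩
    exact ⟨(⟨a, ha⟩, ⟨b, hb⟩), rfl⟩

theorem Subgroup.nonempty_prod_mulEquiv_sup {A B : Subgroup G}
    (hAB : ∀ a ∈ A, ∀ b ∈ B, Commute a b) (hdisj : Disjoint A B) :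
    Nonempty (A × B ≃* ↥(A ⊔ B)) := by
  have hcomm : ∀ (a : A) (b : B), Commute (A.subtype a) (B.subtype b) :=
    fun a b => hAB a a.2 b b.2
  have hinj := (MonoidHom.noncommCoprod_injective _ _ hcomm).mpr
    ⟨A.subtype_injective, B.subtype_injective, by rwa [A.range_subtype, B.range_subtype]⟩
  have hrange := MonoidHom.noncommCoprod_range _ _ hcomm
  rw [A.range_subtype, B.range_subtype] at hrange
  exact ⟨(MonoidHom.ofInjective hinj).trans (MulEquiv.subgroupCongr hrange)⟩

theorem Subgroup.mem_of_mul_mem_sup {H K A B : Subgroup G} (hHK : Disjoint H K) (hAH : A ≤ H)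
    (hBK : B ≤ K) (hAB : ∀ a ∈ A, ∀ b ∈ B, Commute a b) {h k : G} (hh : h ∈ H) (hk : k ∈ K)
    (hmem : h * k ∈ A ⊔ B) : h ∈ A ∧ k ∈ B := by
  obtain ⟨a, ha, b, hb, hab⟩ := (mem_sup_iff_of_commute hAB).mp hmem
  have := mul_injective_of_disjoint hHK
    (a₁ := (⟨a, hAH ha⟩, ⟨b, hBK hb⟩)) (a₂ := (⟨h, hh⟩, ⟨k, hk⟩)) hab
  simp only [Prod.mk.injEq, Subtype.mk.injEq] at this
  exact ⟨this.1 ▸ ha, this.2 ▸ hb⟩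

theorem Subgroup.closure_pair_eq_zpowers_sup (a b : G) :
    closure {a, b} = zpowers a ⊔ zpowers b := by
  rw [← Set.singleton_union, closure_union, zpowers_eq_closure, zpowers_eq_closure]

theorem Commute.of_mem_zpowers {a b g h : G} (hab : Commute a b) (hg : g ∈ zpowers a)
    (hh : h ∈ zpowers b) : Commute g h := by
  obtain ⟨i, rfl⟩ := mem_zpowers_iff.mp hg
  obtain ⟨j, rfl⟩ := mem_zpowers_iff.mp hh
  exact hab.zpow_zpow i j

theorem Commute.nonempty_closure_pair_mulEquiv {a b : G} (hab : Commute a b)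
    (hdisj : Disjoint (zpowers a) (zpowers b)) :
    Nonempty (closure {a, b} ≃* Multiplicative (ZMod (orderOf a) × ZMod (orderOf b))) := by
  obtain ⟨e⟩ := nonempty_prod_mulEquiv_sup (fun _ hg _ hh => hab.of_mem_zpowers hg hh) hdisj
  rw [← Nat.card_zpowers a, ← Nat.card_zpowers b, closure_pair_eq_zpowers_sup]
  exact ⟨e.symm.trans <| ((zmodCyclicMulEquiv inferInstance).symm.prodCongr
    (zmodCyclicMulEquiv inferInstance).symm).trans (MulEquiv.prodMultiplicative _ _).symm⟩

theorem zpow_mem_zpowers_pow_iff {x : G} {n : ℕ} (hn : n ∣ orderOf x) {k : ℤ} :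
    x ^ k ∈ zpowers (x ^ n) ↔ (n : ℤ) ∣ k := by
  rw [mem_zpowers_iff]
  constructor
  · rintro ⟨j, hj⟩
    rw [← zpow_natCast, ← zpow_mul, zpow_eq_zpow_iff_modEq] at hj
    have := (Int.natCast_dvd_natCast.mpr hn).trans hj.dvd
    simpa using dvd_add this (dvd_mul_right (n : ℤ) j)
  · rintro ⟨j, rfl⟩
    exact ⟨j, by rw [← zpow_natCast, ← zpow_mul]⟩

theorem finite_of_closure_pair_eq_top {x y : G} (hx : IsOfFinOrder x) (hy : IsOfFinOrder y)
    [(zpowers x).Normal] (hgen : closure {x, y} = ⊤) : Finite G := by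
  have := hx.finite_zpowers.to_subtype
  have := hy.finite_zpowers.to_subtype
  refine Finite.of_surjective (fun g : zpowers x × zpowers y => (g.1 : G) * g.2) fun g => ?_
  have hg : g ∈ zpowers x ⊔ zpowers y := by
    rw [← closure_pair_eq_zpowers_sup, hgen]; exact mem_top g
  obtain ⟨a, ha, b, hb, rfl⟩ := mem_sup_of_normal_left.mp hg
  exact ⟨(⟨a, ha⟩, ⟨b, hb⟩), rfl⟩

theorem Subgroup.exists_surjective_ker_eq [Finite G] (N : Subgroup G) [N.Normal] :
    ∃ (H : Type) (_ : Group H) (π : G →* H), Function.Surjective π ∧ π.ker = N := by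
  let e : G ⧸ N ≃* Shrink.{0} (G ⧸ N) := Shrink.mulEquiv.symm
  exact ⟨_, inferInstance, e.toMonoidHom.comp (QuotientGroup.mk' N),
    e.surjective.comp (QuotientGroup.mk'_surjective N), by simp⟩

section ConjEqPow

variable {x y : G} {s : ℕ} (hx : IsOfFinOrder x) (hy : IsOfFinOrder y)
  (hgen : closure {x, y} = ⊤) (hrel : y * x * y⁻¹ = x ^ s)
include hx hy hgen hrel

theorem zpowers_normal_of_conj_eq_pow : (zpowers x).Normal := by
  rw [zpowers_eq_closure]
  refine normal_closure_of_conj_mem (by rintro g (rfl | rfl) <;> assumption) hgen ?_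
  simp only [Set.mem_insert_iff, Set.mem_singleton_iff, forall_eq_or_imp, forall_eq]
  refine ⟨?_, ?_⟩
  · rw [mul_inv_cancel_right]; exact mem_closure_singleton_self x
  · rw [hrel]; exact pow_mem (mem_closure_singleton_self x) s

theorem closure_pow_pair_normal_of_conj_eq_pow {n : ℕ} (hs : s ^ n ≡ 1 [MOD n]) :
    (closure {x ^ n, y ^ n}).Normal := by
  refine normal_closure_of_conj_mem (by rintro g (rfl | rfl) <;> assumption) hgen ?_
  have hxn : x ^ n ∈ closure {x ^ n, y ^ n} := subset_closure (by simp)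
  have hyn : y ^ n ∈ closure {x ^ n, y ^ n} := subset_closure (by simp)
  simp only [Set.mem_insert_iff, Set.mem_singleton_iff, forall_eq_or_imp, forall_eq]
  refine ⟨⟨?_, ?_⟩, ?_, ?_⟩
  · rwa [(Commute.self_pow x n).eq, mul_inv_cancel_right]
  · obtain ⟨q, hq⟩ := Nat.modEq_iff_dvd.mp hs.symm
    have hconj := conj_pow_zpow_of_conj_eq_pow hrel n (-1)
    have : x * y ^ n * x⁻¹ = (x ^ n) ^ (-q) * y ^ n := by
      calc x * y ^ n * x⁻¹ = x * (y ^ n * x ^ (-1 : ℤ) * (y ^ n)⁻¹) * y ^ n := by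
            simp [mul_assoc]
        _ = x ^ ((1 : ℤ) + ((s ^ n : ℕ) : ℤ) * -1) * y ^ n := by rw [hconj, zpow_one_add]
        _ = x ^ ((n : ℤ) * -q) * y ^ n := by congr 2; push_cast at hq ⊢; linarith
        _ = (x ^ n) ^ (-q) * y ^ n := by rw [zpow_mul, zpow_natCast]
    rw [this]
    exact mul_mem (zpow_mem hxn _) hyn
  · rw [← conj_pow, hrel, pow_right_comm]; exact pow_mem hxn s
  · rwa [(Commute.self_pow y n).eq, mul_inv_cancel_right]

end ConjEqPow

section DisjointZPowers

variable {x y : G} {n : ℕ} (hdisj : Disjoint (zpowers x) (zpowers y))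
  (hcomm : Commute (x ^ n) (y ^ n))
include hdisj hcomm

theorem zpow_mem_zpowers_pow_of_mul_mem_closure {i j : ℤ}
    (h : x ^ i * y ^ j ∈ closure {x ^ n, y ^ n}) : x ^ i ∈ zpowers (x ^ n) := by
  rw [closure_pair_eq_zpowers_sup] at h
  exact (mem_of_mul_mem_sup hdisj (zpowers_le.mpr (pow_mem (mem_zpowers x) n))
    (zpowers_le.mpr (pow_mem (mem_zpowers y) n)) (fun _ hg _ hh => hcomm.of_mem_zpowers hg hh)
    (zpow_mem (mem_zpowers x) i) (zpow_mem (mem_zpowers y) j) h).1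

theorem zpow_mem_closure_pow_pair_iff (hn : n ∣ orderOf x) {k : ℤ} :
    x ^ k ∈ closure {x ^ n, y ^ n} ↔ (n : ℤ) ∣ k := by
  rw [← zpow_mem_zpowers_pow_iff hn]
  refine ⟨fun h => zpow_mem_zpowers_pow_of_mul_mem_closure hdisj hcomm (j := 0) (by simpa),
    fun h => ?_⟩
  rw [closure_pair_eq_zpowers_sup]
  exact mem_sup_left h

theorem nonempty_closure_pow_pair_mulEquiv {p : ℕ} (hn : 0 < n) (hx : orderOf x = p * n)
    (hy : orderOf y = p * n) :
    Nonempty (closure {x ^ n, y ^ n} ≃* Multiplicative (ZMod p × ZMod p)) := by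
  have hord : ∀ g : G, orderOf g = p * n → orderOf (g ^ n) = p := fun g hg => by
    rw [orderOf_pow_of_dvd hn.ne' (hg ▸ dvd_mul_left n p), hg, Nat.mul_div_cancel _ hn]
  obtain ⟨e⟩ := hcomm.nonempty_closure_pair_mulEquiv <| hdisj.mono
    (zpowers_le.mpr (pow_mem (mem_zpowers x) n)) (zpowers_le.mpr (pow_mem (mem_zpowers y) n))
  rw [hord x hx, hord y hy] at e
  exact ⟨e⟩

variable {H : Type*} [Group H] {π : G →* H} (hker : π.ker = closure {x ^ n, y ^ n})
include hker

theorem orderOf_map_of_ker_eq_closure_pow_pair (hn : n ∣ orderOf x) : orderOf (π x) = n :=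
  Nat.dvd_right_iff_eq.mp fun k => by
    rw [orderOf_dvd_iff_pow_eq_one, ← map_pow, ← π.mem_ker, hker, ← zpow_natCast x k,
      zpow_mem_closure_pow_pair_iff hdisj hcomm hn, Int.natCast_dvd_natCast]

theorem zpowers_map_inf_zpowers_map_eq_bot_of_ker_eq :
    zpowers (π x) ⊓ zpowers (π y) = ⊥ := by
  rw [eq_bot_iff]
  intro z hz
  obtain ⟨⟨i, rfl⟩, ⟨j, hj⟩⟩ := And.imp mem_zpowers_iff.mp mem_zpowers_iff.mp (mem_inf.mp hz)
  have hmem : x ^ i * y ^ (-j) ∈ closure {x ^ n, y ^ n} := by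
    rw [← hker, π.mem_ker, map_mul, map_zpow, map_zpow, zpow_neg, hj, mul_inv_cancel]
  have hxi := zpow_mem_zpowers_pow_of_mul_mem_closure hdisj hcomm hmem
  rw [mem_bot, ← map_zpow, ← π.mem_ker, hker]
  exact closure_pair_eq_zpowers_sup (x ^ n) (y ^ n) ▸ mem_sup_left hxi

end DisjointZPowers

end

/-- Let `G = ⟨x, y⟩ ≅ C_m ⋉_φ C_m` with `p` the largest prime divisor of `m`.
Then `N = ⟨x^{m/p}, y^{m/p}⟩` is a normal subgroup isomorphic to `C_p × C_p`,
and `G/N ≅ C_{m/p} ⋉_φ C_{m/p}` (expressed via a surjective homomorphism with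
kernel `N` onto a group with the corresponding presentation). -/
theorem normal_CpCp_subgroup {G : Type*} [Group G] (m p s : ℕ) (hm : 0 < m)
    (hp : p.Prime) (hpm : p ∣ m) (hmax : ∀ q : ℕ, q.Prime → q ∣ m → q ≤ p)
    (x y : G) (hx : orderOf x = m) (hy : orderOf y = m)
    (hgen : Subgroup.closure ({x, y} : Set G) = ⊤)
    (hint : Subgroup.zpowers x ⊓ Subgroup.zpowers y = ⊥)
    (hrel : y * x * y⁻¹ = x ^ s) (hs : Nat.Coprime s m) :
    (Subgroup.closure ({x ^ (m / p), y ^ (m / p)} : Set G)).Normal ∧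
    Nonempty (↥(Subgroup.closure ({x ^ (m / p), y ^ (m / p)} : Set G)) ≃*
      Multiplicative (ZMod p × ZMod p)) ∧
    ∃ (H : Type) (_ : Group H) (π : G →* H),
      Function.Surjective π ∧
      π.ker = Subgroup.closure ({x ^ (m / p), y ^ (m / p)} : Set G) ∧
      orderOf (π x) = m / p ∧ orderOf (π y) = m / p ∧
      Subgroup.closure ({π x, π y} : Set H) = ⊤ ∧
      Subgroup.zpowers (π x) ⊓ Subgroup.zpowers (π y) = ⊥ ∧
      π y * π x * (π y)⁻¹ = π x ^ s := by
  set n := m / p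
  have hmn : m = p * n := (Nat.mul_div_cancel' hpm).symm
  have hnm : n ∣ m := Nat.div_dvd_of_dvd hpm
  have hxfin : IsOfFinOrder x := orderOf_pos_iff.mp (hx ▸ hm)
  have hyfin : IsOfFinOrder y := orderOf_pos_iff.mp (hy ▸ hm)
  have hdisj : Disjoint (zpowers x) (zpowers y) := disjoint_iff.mpr hint
  have hsm : s ^ m ≡ 1 [MOD m] := by
    simpa [hx, hy] using pow_modEq_one_of_conj_eq_pow hrel (pow_orderOf_eq_one y)
  have hsn : s ^ n ≡ 1 [MOD n] := Nat.pow_modEq_one_of_pow_prime_mul_modEq_one hp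
    (fun q hq => hmax q (Nat.prime_of_mem_primeFactors hq)
      ((Nat.dvd_of_mem_primeFactors hq).trans hnm))
    (hs.coprime_dvd_right hnm) (hmn ▸ hsm.of_dvd hnm)
  have hsp : s ^ n ≡ 1 [MOD p] :=
    (Nat.pow_prime_mul_modEq_pow hp s n).symm.trans (hmn ▸ hsm.of_dvd hpm)
  have hcomm : Commute (x ^ n) (y ^ n) := commute_pow_pow_of_conj_eq_pow hrel (hx.trans hmn) hsp
  have hN := closure_pow_pair_normal_of_conj_eq_pow hxfin hyfin hgen hrel hsn
  have := zpowers_normal_of_conj_eq_pow hxfin hyfin hgen hrel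
  have := finite_of_closure_pair_eq_top hxfin hyfin hgen
  obtain ⟨H, _, π, hπ, hker⟩ := exists_surjective_ker_eq (closure {x ^ n, y ^ n})
  refine ⟨hN, nonempty_closure_pow_pair_mulEquiv hdisj hcomm
      (Nat.div_pos (Nat.le_of_dvd hm hpm) hp.pos) (hx.trans hmn) (hy.trans hmn),
    H, _, π, hπ, hker, orderOf_map_of_ker_eq_closure_pow_pair hdisj hcomm hker (hx ▸ hnm),
    orderOf_map_of_ker_eq_closure_pow_pair hdisj.symm hcomm.symm
      (Set.pair_comm (x ^ n) (y ^ n) ▸ hker) (hy ▸ hnm), ?_,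
    zpowers_map_inf_zpowers_map_eq_bot_of_ker_eq hdisj hcomm hker, ?_⟩
  · rw [← Set.image_pair, ← MonoidHom.map_closure, hgen, ← MonoidHom.range_eq_map,
      MonoidHom.range_eq_top.mpr hπ]
  · rw [← map_inv, ← map_mul, ← map_mul, hrel, map_pow]
end

section
/- Let m be a positive integer whose largest prime divisor is p, and let s be an integer with s^m ≡ 1 (mod m) and gcd(s, m) = 1. Then s^{m/p} ≡ 1 (mod m). -/
/-! The multiplicative order of `s` modulo `m` divides both `m` and `φ m`, hence `gcd m (φ m)`.
Write `m = p ^ (e + 1) * n` with `p ∤ n`. All prime factors of `n` are smaller than `p`, so `p`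
divides no factor `q ^ (k - 1) * (q - 1)` of `φ n`; as
`φ m = p ^ e * ((p - 1) * φ n)`, the `p`-part of `gcd m (φ m)` is only `p ^ e`, and
`gcd m (φ m) ∣ p ^ e * n = m / p`. -/

open Nat

namespace Nat

theorem Prime.not_dvd_totient_of_forall_lt {p n : ℕ} (hp : p.Prime)
    (h : ∀ q : ℕ, q.Prime → q ∣ n → q < p) : ¬ p ∣ φ n := by
  have hn : n ≠ 0 := by
    rintro rfl
    exact lt_irrefl p (h p hp (dvd_zero p))
  rw [totient_eq_prod_factorization hn]
  refine hp.prime.not_dvd_finsetProd fun q hqn hdvd => ?_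
  have hq : q.Prime := prime_of_mem_primeFactors hqn
  have hqp : q < p := h q hq (dvd_of_mem_primeFactors hqn)
  rcases hp.dvd_mul.1 hdvd with hpq | hpq
  · exact hqp.ne' ((prime_dvd_prime_iff_eq hp hq).1 (hp.dvd_of_dvd_pow hpq))
  · exact not_dvd_of_pos_of_lt (Nat.sub_pos_of_lt hq.one_lt) (by omega) hpq

theorem gcd_totient_prime_pow_succ_mul_dvd {p n : ℕ} (hp : p.Prime) (e : ℕ)
    (hpn : ¬ p ∣ n) (hpφ : ¬ p ∣ φ n) :
    gcd (p ^ (e + 1) * n) (φ (p ^ (e + 1) * n)) ∣ p ^ e * n := by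
  have hφ : φ (p ^ (e + 1) * n) = p ^ e * ((p - 1) * φ n) := by
    rw [totient_mul ((hp.coprime_iff_not_dvd.2 hpn).pow_left _), totient_prime_pow_succ hp,
      mul_assoc]
  have hpc : p.Coprime ((p - 1) * φ n) := by
    refine hp.coprime_iff_not_dvd.2 fun h => ?_
    rcases hp.dvd_mul.1 h with h | h
    · exact not_dvd_of_pos_of_lt (Nat.sub_pos_of_lt hp.one_lt) (Nat.sub_lt hp.pos one_pos) h
    · exact hpφ h
  calc gcd (p ^ (e + 1) * n) (φ (p ^ (e + 1) * n))
      = p ^ e * gcd (p * n) ((p - 1) * φ n) := by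
        rw [hφ, pow_succ, mul_assoc, gcd_mul_left]
    _ = p ^ e * gcd n ((p - 1) * φ n) := by rw [hpc.gcd_mul_left_cancel]
    _ ∣ p ^ e * n := mul_dvd_mul_left _ (gcd_dvd_left _ _)

theorem gcd_totient_dvd_div_of_forall_prime_dvd_le {m p : ℕ} (hp : p.Prime) (hpm : p ∣ m)
    (hmax : ∀ q : ℕ, q.Prime → q ∣ m → q ≤ p) : gcd m (φ m) ∣ m / p := by
  rcases eq_or_ne m 0 with rfl | hm
  · simp
  obtain ⟨e, n, hpn, rfl⟩ := exists_eq_pow_mul_and_not_dvd hm p hp.ne_one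
  obtain ⟨e, rfl⟩ : ∃ e', e = e' + 1 := by
    refine exists_eq_add_one.2 (Nat.pos_of_ne_zero ?_)
    rintro rfl
    exact hpn (by simpa using hpm)
  have hpφ : ¬ p ∣ φ n := hp.not_dvd_totient_of_forall_lt fun q hq hqn =>
    (hmax q hq (dvd_mul_of_dvd_right hqn _)).lt_of_ne (by rintro rfl; exact hpn hqn)
  have hdiv : p ^ (e + 1) * n / p = p ^ e * n := by
    rw [pow_succ', mul_assoc, Nat.mul_div_cancel_left _ hp.pos]
  rw [hdiv]
  exact gcd_totient_prime_pow_succ_mul_dvd hp e hpn hpφ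

end Nat

theorem ZMod.pow_totient_of_pow_eq_one {n k : ℕ} {x : ZMod n} (hk : k ≠ 0) (h : x ^ k = 1) :
    x ^ φ n = 1 := by
  obtain ⟨u, rfl⟩ := IsUnit.of_pow_eq_one h hk
  rw [← Units.val_pow_eq_pow_val, ZMod.pow_totient, Units.val_one]

theorem pow_div_largest_prime_cong_one_general (m p : ℕ) (s : ℤ)
    (hp : p.Prime) (hpm : p ∣ m) (hmax : ∀ q : ℕ, q.Prime → q ∣ m → q ≤ p)
    (hpow : s ^ m ≡ 1 [ZMOD (m : ℕ)]) :
    s ^ (m / p) ≡ 1 [ZMOD (m : ℕ)] := by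
  rcases eq_or_ne m 0 with rfl | hm
  · simp
  rw [← ZMod.intCast_eq_intCast_iff] at hpow ⊢
  push_cast at hpow ⊢
  have hgcd : (s : ZMod m) ^ Nat.gcd m (φ m) = 1 :=
    pow_gcd_eq_one.2 ⟨hpow, ZMod.pow_totient_of_pow_eq_one hm hpow⟩
  exact orderOf_dvd_iff_pow_eq_one.1 <| (orderOf_dvd_of_pow_eq_one hgcd).trans
    (gcd_totient_dvd_div_of_forall_prime_dvd_le hp hpm hmax)

/-- If `p` is the largest prime divisor of `m`, `gcd(s, m) = 1` and
`s^m ≡ 1 (mod m)`, then `s^{m/p} ≡ 1 (mod m)`. -/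
theorem pow_div_largest_prime_cong_one (m p : ℕ) (s : ℤ) (hm : 0 < m)
    (hp : p.Prime) (hpm : p ∣ m) (hmax : ∀ q : ℕ, q.Prime → q ∣ m → q ≤ p)
    (hcop : Int.gcd s (m : ℤ) = 1) (hpow : s ^ m ≡ 1 [ZMOD (m : ℕ)]) :
    s ^ (m / p) ≡ 1 [ZMOD (m : ℕ)] :=
  pow_div_largest_prime_cong_one_general m p s hp hpm hmax hpow
end

section
/- Let G = ⟨x, y⟩ ≅ C_m ⋉_φ C_{mn} with ord(x) = m, ord(y) = mn, ⟨x⟩ ∩ ⟨y⟩ = {1}, and xyx⁻¹ = y^s. Then the sequence S = x^{[m−1]} · y^{[mn−1]} (the element x repeated m−1 times together with y repeated mn−1 times) is product-one free, i.e. no nonempty subsequence of S has a product (in some order) equal to the identity. Consequently d(G) ≥ m + mn − 2. -/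
/-- A sequence (multiset) over `G` is product-one if its terms can be ordered so
that their product equals `1`. -/
def IsProductOne {G : Type*} [Group G] (S : Multiset G) : Prop :=
  ∃ l : List G, (l : Multiset G) = S ∧ l.prod = 1

/-- A sequence is product-one free if it has no nonempty product-one subsequence. -/
def ProductOneFree {G : Type*} [Group G] (S : Multiset G) : Prop :=
  ∀ T ≤ S, T ≠ 0 → ¬ IsProductOne T

/-! Since `x` normalizes `⟨y⟩`, a product of `a` copies of `x` and some copies of `y`, in any
order, equals `y ^ c * x ^ a` for some `c`. If it is `1`, then `x ^ a ∈ ⟨x⟩ ∩ ⟨y⟩ = 1`, so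
`ord x ∣ a`, which forces `a = 0` as `a < ord x`. What is left is `y ^ b` with `0 < b < ord y`,
which is not `1`. -/

open Subgroup Multiset

theorem Nat.eq_zero_of_dvd_of_le_sub_one {a b : ℕ} (hdvd : a ∣ b) (hle : b ≤ a - 1) : b = 0 := by
  by_contra hb
  have := Nat.le_of_dvd (Nat.pos_of_ne_zero hb) hdvd
  omega

section

variable {G : Type*} [Group G]

theorem ProductOneFree.zero : ProductOneFree (0 : Multiset G) :=
  fun _ hT hT0 _ => hT0 (Multiset.le_zero.mp hT)

theorem IsProductOne.pow_eq_one_of_replicate {g : G} {k : ℕ}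
    (h : IsProductOne (replicate k g)) : g ^ k = 1 := by
  obtain ⟨l, hl, hprod⟩ := h
  rw [← coe_replicate, coe_eq_coe, List.perm_replicate] at hl
  rwa [hl, List.prod_replicate] at hprod

theorem productOneFree_replicate_orderOf_sub_one (g : G) :
    ProductOneFree (replicate (orderOf g - 1) g) := by
  intro T hT hT0 hprod
  obtain ⟨k, hk, rfl⟩ := le_replicate_iff.mp hT
  have hk0 : k = 0 :=
    Nat.eq_zero_of_dvd_of_le_sub_one (orderOf_dvd_of_pow_eq_one hprod.pow_eq_one_of_replicate) hk
  exact hT0 (by rw [hk0, replicate_zero])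

theorem List.prod_mul_inv_pow_count_mem [DecidableEq G] {x : G} {H : Subgroup G}
    (hxH : ∀ h ∈ H, x * h * x⁻¹ ∈ H) {l : List G} (hl : ∀ g ∈ l, g = x ∨ g ∈ H) :
    l.prod * (x ^ l.count x)⁻¹ ∈ H := by
  induction l with
  | nil => simp
  | cons g t ih =>
    have ht := ih fun g hg => hl g (List.mem_cons_of_mem _ hg)
    by_cases hgx : g = x
    · subst hgx
      rw [List.prod_cons, List.count_cons_self, pow_succ]
      convert hxH _ ht using 1
      group
    · have hgH : g ∈ H := (hl g List.mem_cons_self).resolve_left hgx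
      rw [List.prod_cons, List.count_cons_of_ne hgx, mul_assoc]
      exact mul_mem hgH ht

theorem conj_mem_zpowers_of_conj_mem {x y : G} (hconj : x * y * x⁻¹ ∈ zpowers y) :
    ∀ h ∈ zpowers y, x * h * x⁻¹ ∈ zpowers y := by
  rintro _ ⟨k, rfl⟩
  simpa only [conj_zpow] using zpow_mem hconj k

theorem productOneFree_replicate_add_replicate [DecidableEq G] {x y : G}
    (hdisj : Disjoint (zpowers x) (zpowers y)) (hconj : x * y * x⁻¹ ∈ zpowers y) :
    ProductOneFree (replicate (orderOf x - 1) x + replicate (orderOf y - 1) y) := by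
  obtain rfl | hxy := eq_or_ne x y
  · have hx1 : x = 1 := zpowers_eq_bot.mp (disjoint_self.mp hdisj)
    simpa [hx1] using ProductOneFree.zero
  intro T hT hT0 hprod
  obtain ⟨l, rfl, hl⟩ := hprod
  have hmem : ∀ g ∈ l, g = x ∨ g ∈ zpowers y := by
    intro g hg
    rcases mem_add.mp (mem_of_le hT hg) with h | h
    · exact .inl (eq_of_mem_replicate h)
    · exact .inr (eq_of_mem_replicate h ▸ mem_zpowers y)
  have hcount_le : l.count x ≤ orderOf x - 1 := by
    simpa [count_replicate, hxy.symm] using count_le_of_le x hT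
  have hpow_mem : x ^ l.count x ∈ zpowers y := by
    have := List.prod_mul_inv_pow_count_mem (conj_mem_zpowers_of_conj_mem hconj) hmem
    rwa [hl, one_mul, inv_mem_iff] at this
  have hcount : l.count x = 0 :=
    Nat.eq_zero_of_dvd_of_le_sub_one
      (orderOf_dvd_of_pow_eq_one (disjoint_def.mp hdisj (npow_mem_zpowers x _) hpow_mem))
      hcount_le
  have hTy : (l : Multiset G) ≤ replicate (orderOf y - 1) y := by
    rw [le_iff_count]
    intro a
    by_cases hax : a = x
    · simp [hax, hcount]
    · simpa [count_replicate, Ne.symm hax] using count_le_of_le a hT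
  exact productOneFree_replicate_orderOf_sub_one y _ hTy hT0 ⟨l, rfl, hl⟩

end

theorem extremal_sequence_product_one_free_general {G : Type*} [Group G] (m n s : ℕ)
    (x y : G)
    (hx : orderOf x = m) (hy : orderOf y = m * n)
    (hint : Subgroup.zpowers x ⊓ Subgroup.zpowers y = ⊥)
    (hrel : x * y * x⁻¹ = y ^ s) :
    ProductOneFree (Multiset.replicate (m - 1) x + Multiset.replicate (m * n - 1) y) ∧
    ∀ d : ℕ, IsGreatest {k : ℕ | ∃ S : Multiset G, Multiset.card S = k ∧ ProductOneFree S} d →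
      m + m * n - 2 ≤ d := by
  classical
  have hfree : ProductOneFree (replicate (m - 1) x + replicate (m * n - 1) y) := by
    rw [← hy, ← hx]
    exact productOneFree_replicate_add_replicate (disjoint_iff.mpr hint)
      (hrel ▸ npow_mem_zpowers y s)
  refine ⟨hfree, fun d hd => ?_⟩
  have hcard := hd.2 ⟨_, rfl, hfree⟩
  simp only [card_add, card_replicate] at hcard
  omega

/-- For `G = ⟨x, y⟩ ≅ C_m ⋉_φ C_{mn}`, the sequence `x^{[m−1]} · y^{[mn−1]}` is
product-one free; consequently `d(G) ≥ m + mn − 2`. -/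
theorem extremal_sequence_product_one_free {G : Type*} [Group G] (m n s : ℕ)
    (hm : 0 < m) (hn : 0 < n) (x y : G)
    (hx : orderOf x = m) (hy : orderOf y = m * n)
    (hgen : Subgroup.closure ({x, y} : Set G) = ⊤)
    (hint : Subgroup.zpowers x ⊓ Subgroup.zpowers y = ⊥)
    (hrel : x * y * x⁻¹ = y ^ s) (hs : s ^ m ≡ 1 [MOD m * n]) :
    ProductOneFree (Multiset.replicate (m - 1) x + Multiset.replicate (m * n - 1) y) ∧
    ∀ d : ℕ, IsGreatest {k : ℕ | ∃ S : Multiset G, Multiset.card S = k ∧ ProductOneFree S} d →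
      m + m * n - 2 ≤ d :=
  extremal_sequence_product_one_free_general m n s x y hx hy hint hrel
end

section
/- Let p be a prime and k a positive integer. Then the generalized Davenport constant satisfies D_k(C_p × C_p) = kp + p − 1; that is, every sequence over C_p × C_p of length at least kp + p − 1 contains k nonempty pairwise disjoint zero-sum subsequences, and kp + p − 1 is minimal with this property. -/
/-!
Upper bound: Chevalley–Warning applied to the forms `∑ᵢ aᵢ xᵢ ^ (p - 1)` shows that any `2p - 1`
elements of `C_p × C_p` contain a nonempty zero-sum subsequence, and any `3p - 2` elements one
whose length is a multiple of `p`; a zero-sum of length `2p` splits once more, so `3p - 2`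
elements contain a nonempty zero-sum of length at most `p`. Removing such short zero-sums `k - 1`
times leaves the `2p - 1` elements needed for the last one.

Lower bound: in `(kp - 1) · (1, 0) + (p - 1) · (0, 1)` a nonempty zero-sum subsequence cannot use
`(0, 1)` and must use at least `p` copies of `(1, 0)`, so `k` disjoint ones do not fit.
-/

open Finset MvPolynomial Module

section ChevalleyWarning

variable {K : Type*} [Field K] [Fintype K]

theorem FiniteField.pow_card_sub_one_eq_ite [DecidableEq K] (a : K) :
    a ^ (Fintype.card K - 1) = if a = 0 then 0 else 1 := by
  split_ifs with ha
  · have := Fintype.one_lt_card (α := K)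
    rw [ha, zero_pow (by omega)]
  · exact FiniteField.pow_card_sub_one_eq_one a ha

theorem exists_nonempty_forall_sum_eq_zero_of_card_mul_lt {κ ι : Type*} [Fintype κ] [Fintype ι]
    (a : κ → ι → K) (h : Fintype.card κ * (Fintype.card K - 1) < Fintype.card ι) :
    ∃ t : Finset ι, t.Nonempty ∧ ∀ j, ∑ i ∈ t, a j i = 0 := by
  classical
  let f : κ → MvPolynomial ι K := fun j => ∑ i, a j i • X i ^ (Fintype.card K - 1)
  have hdeg : ∑ j ∈ univ, (f j).totalDegree < Fintype.card ι := calc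
    _ ≤ ∑ _j : κ, (Fintype.card K - 1) := sum_le_sum fun j _ =>
        totalDegree_finsetSum_le fun i _ => (totalDegree_smul_le ..).trans (totalDegree_X_pow ..).le
    _ < _ := by simpa [mul_comm] using h
  have hdvd : ringChar K ∣ Fintype.card {x : ι → K // ∀ j ∈ univ, eval x (f j) = 0} := by
    convert char_dvd_card_solutions_of_sum_lt (ringChar K) hdeg
  let zero_sol : {x : ι → K // ∀ j ∈ univ, eval x (f j) = 0} :=
    ⟨0, by simp [f, FiniteField.pow_card_sub_one_eq_ite]⟩
  obtain ⟨x, hx⟩ := Fintype.exists_ne_of_one_lt_card ((CharP.char_is_prime K _).one_lt.trans_le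
    (Nat.le_of_dvd (Fintype.card_pos_iff.2 ⟨zero_sol⟩) hdvd)) zero_sol
  -- `y ^ (q - 1)` is the indicator of `y ≠ 0`, so a common root picks out its support.
  have heval : ∀ j, eval x.1 (f j) = ∑ i ∈ {i | x.1 i ≠ 0}, a j i := by
    simp [f, FiniteField.pow_card_sub_one_eq_ite, sum_filter]
  refine ⟨({i | x.1 i ≠ 0} : Finset ι), ?_, fun j => (heval j).symm.trans (x.2 j (mem_univ j))⟩
  rw [← Subtype.coe_ne_coe, Function.ne_iff] at hx
  simpa [Finset.Nonempty, zero_sol] using hx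

variable {V ι : Type*} [AddCommGroup V] [Module K V] [FiniteDimensional K V]

theorem exists_nonempty_sum_eq_zero_of_finrank_mul_lt [Fintype ι] (v : ι → V)
    (h : finrank K V * (Fintype.card K - 1) < Fintype.card ι) :
    ∃ t : Finset ι, t.Nonempty ∧ ∑ i ∈ t, v i = 0 := by
  let b := Module.finBasis K V
  obtain ⟨t, ht, hsum⟩ := exists_nonempty_forall_sum_eq_zero_of_card_mul_lt
    (fun j i => b.repr (v i) j) (by simpa using h)
  refine ⟨t, ht, b.ext_elem fun j => ?_⟩
  simpa [map_sum] using hsum j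

theorem Finset.exists_nonempty_subset_sum_eq_zero_of_finrank_mul_lt (v : ι → V) (s : Finset ι)
    (h : finrank K V * (Fintype.card K - 1) < #s) :
    ∃ t ⊆ s, t.Nonempty ∧ ∑ i ∈ t, v i = 0 := by
  obtain ⟨t, ht, hsum⟩ := exists_nonempty_sum_eq_zero_of_finrank_mul_lt (fun i : s => v i)
    (by simpa using h)
  exact ⟨t.map (Function.Embedding.subtype _), by simp +contextual [subset_iff], ht.map,
    by simpa using hsum⟩

theorem Multiset.exists_le_sum_eq_zero_of_finrank_mul_lt (S : Multiset V)
    (h : finrank K V * (Fintype.card K - 1) < Multiset.card S) :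
    ∃ T ≤ S, T ≠ 0 ∧ T.sum = 0 := by
  classical
  obtain ⟨t, hts, ht, hsum⟩ := S.toEnumFinset.exists_nonempty_subset_sum_eq_zero_of_finrank_mul_lt
    (K := K) Prod.fst (by simpa using h)
  exact ⟨t.1.map Prod.fst, Multiset.map_fst_le_of_subset_toEnumFinset hts,
    by simpa using ht.ne_empty, hsum⟩

theorem Multiset.exists_le_sum_eq_zero_card_eq_zero_of_finrank_mul_lt (S : Multiset V)
    (h : (finrank K V + 1) * (Fintype.card K - 1) < Multiset.card S) :
    ∃ T ≤ S, T ≠ 0 ∧ T.sum = 0 ∧ (Multiset.card T : K) = 0 := by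
  classical
  -- The extra coordinate `1 : K` records the length of the subsequence.
  obtain ⟨t, hts, ht, hsum⟩ := S.toEnumFinset.exists_nonempty_subset_sum_eq_zero_of_finrank_mul_lt
    (K := K) (fun x => (x.1, (1 : K))) (by simpa using h)
  rw [Prod.ext_iff] at hsum
  exact ⟨t.1.map Prod.fst, Multiset.map_fst_le_of_subset_toEnumFinset hts,
    by simpa using ht.ne_empty, by simpa [Prod.fst_sum] using hsum.1,
    by simpa [Prod.snd_sum] using hsum.2⟩

end ChevalleyWarning

namespace Multiset

variable {α : Type*}

theorem exists_le_card_eq {S : Multiset α} {n : ℕ} (h : n ≤ card S) :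
    ∃ T ≤ S, card T = n := by
  classical
  obtain ⟨t, hts, ht⟩ := Finset.exists_subset_card_eq (s := S.toEnumFinset) (by simpa using h)
  exact ⟨t.1.map Prod.fst, map_fst_le_of_subset_toEnumFinset hts, by simpa using ht⟩

theorem le_replicate_add_replicate {M : Multiset α} {x y : α} {m n : ℕ}
    (h : M ≤ replicate m x + replicate n y) :
    ∃ a ≤ m, ∃ b ≤ n, M = replicate a x + replicate b y := by
  classical
  obtain ⟨a, ha, hMa⟩ := le_replicate_iff.mp (inter_le_right : M ∩ replicate m x ≤ _)
  obtain ⟨b, hb, hMb⟩ := le_replicate_iff.mp (tsub_le_iff_left.mpr h)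
  exact ⟨a, ha, b, hb, by rw [← hMa, ← hMb, add_comm, sub_add_inter]⟩

variable [AddCommMonoid α]

theorem exists_zero_sum_two_mul_card_le_of_lt {T U : Multiset α} (hUT : U < T) (hU : U ≠ 0)
    (hUsum : U.sum = 0) (hTsum : T.sum = 0) :
    ∃ W ≤ T, W ≠ 0 ∧ W.sum = 0 ∧ 2 * card W ≤ card T := by
  classical
  by_cases h : 2 * card U ≤ card T
  · exact ⟨U, hUT.le, hU, hUsum, h⟩
  refine ⟨T - U, tsub_le_self, (tsub_pos_of_lt hUT).ne', ?_, ?_⟩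
  · simpa [hUsum, hTsum] using congrArg sum (tsub_add_cancel_of_le hUT.le)
  · rw [card_sub hUT.le]
    omega

end Multiset

open Multiset

def HasDisjointZeroSums {G : Type*} [AddCommMonoid G] (k : ℕ) (S : Multiset G) : Prop :=
  ∃ T : Fin k → Multiset G, (∑ i, T i) ≤ S ∧ ∀ i, T i ≠ 0 ∧ (T i).sum = 0

theorem hasDisjointZeroSums_of_card_le {G : Type*} [AddCommMonoid G] {D n : ℕ}
    (hD : ∀ S : Multiset G, D ≤ card S → ∃ T ≤ S, T ≠ 0 ∧ T.sum = 0)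
    (hn : ∀ S : Multiset G, D + n ≤ card S → ∃ T ≤ S, T ≠ 0 ∧ T.sum = 0 ∧ card T ≤ n)
    (k : ℕ) (S : Multiset G) (hS : D + k * n ≤ card S) : HasDisjointZeroSums (k + 1) S := by
  classical
  induction k generalizing S with
  | zero =>
    obtain ⟨T, hTS, hT⟩ := hD S (by simpa using hS)
    exact ⟨fun _ => T, by simpa using hTS, fun _ => hT⟩
  | succ k ih =>
    obtain ⟨T₀, hT₀S, hT₀, hT₀sum, hT₀card⟩ := hn S (by nlinarith)
    have hrest : D + k * n ≤ card (S - T₀) := by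
      rw [card_sub hT₀S]
      have := card_le_card hT₀S
      rw [Nat.succ_mul] at hS
      omega
    obtain ⟨T, hTS, hT⟩ := ih (S - T₀) hrest
    refine ⟨Fin.cons T₀ T, ?_, Fin.forall_fin_succ.mpr ⟨⟨hT₀, hT₀sum⟩, by simpa using hT⟩⟩
    rw [Fin.sum_cons]
    exact (le_tsub_iff_left hT₀S).mp hTS

section PrimeSquare

variable {p : ℕ} [Fact p.Prime]

theorem exists_zero_sum_of_two_mul_sub_one_le (S : Multiset (ZMod p × ZMod p))
    (h : 2 * p - 1 ≤ card S) : ∃ T ≤ S, T ≠ 0 ∧ T.sum = 0 :=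
  S.exists_le_sum_eq_zero_of_finrank_mul_lt (K := ZMod p) (by
    have := (Fact.out : p.Prime).two_le
    simp only [finrank_prod, finrank_self, Nat.reduceAdd, ZMod.card]
    omega)

theorem exists_zero_sum_card_le_of_three_mul_sub_two_le (S : Multiset (ZMod p × ZMod p))
    (h : 3 * p - 2 ≤ card S) : ∃ T ≤ S, T ≠ 0 ∧ T.sum = 0 ∧ card T ≤ p := by
  have hp := (Fact.out : p.Prime).two_le
  obtain ⟨S₀, hS₀S, hS₀⟩ := exists_le_card_eq h
  obtain ⟨T, hTS₀, hT, hTsum, hTp⟩ :=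
    S₀.exists_le_sum_eq_zero_card_eq_zero_of_finrank_mul_lt (K := ZMod p)
      (by simp only [finrank_prod, finrank_self, Nat.reduceAdd, ZMod.card]; omega)
  obtain ⟨c, hc⟩ := (ZMod.natCast_eq_zero_iff _ _).mp hTp
  have hc3 : c < 3 := by
    have := card_le_card hTS₀
    by_contra! h3
    have := Nat.mul_le_mul_left p h3
    omega
  have hc0 : c ≠ 0 := by rintro rfl; exact hT (card_eq_zero.mp (hc.trans (mul_zero p)))
  obtain rfl | rfl : c = 1 ∨ c = 2 := by omega
  · exact ⟨T, hTS₀.trans hS₀S, hT, hTsum, by omega⟩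
  obtain ⟨x, hx⟩ := exists_mem_of_ne_zero hT
  obtain ⟨U, hUT, hU, hUsum⟩ := exists_zero_sum_of_two_mul_sub_one_le (p := p) (T.erase x)
    (by rw [card_erase_of_mem hx, Nat.pred_eq_sub_one]; omega)
  obtain ⟨W, hWT, hW, hWsum, hWcard⟩ :=
    exists_zero_sum_two_mul_card_le_of_lt (hUT.trans_lt (erase_lt.mpr hx)) hU hUsum hTsum
  exact ⟨W, hWT.trans (hTS₀.trans hS₀S), hW, hWsum, by omega⟩

end PrimeSquare

theorem not_hasDisjointZeroSums_replicate {p k : ℕ} (hp : 1 < p) (hk : 0 < k) :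
    ¬ HasDisjointZeroSums k
      (replicate (k * p - 1) ((1, 0) : ZMod p × ZMod p) + replicate (p - 1) (0, 1)) := by
  have : Fact (1 < p) := ⟨hp⟩
  rintro ⟨T, hTS, hT⟩
  have hle : ∀ i, replicate p ((1, 0) : ZMod p × ZMod p) ≤ T i := by
    intro i
    obtain ⟨a, -, b, hb, hTi⟩ := le_replicate_add_replicate
      ((Finset.single_le_sum (fun j _ => zero_le) (Finset.mem_univ i)).trans hTS)
    obtain ⟨hTi0, hTisum⟩ := hT i
    have hab : p ∣ a ∧ p ∣ b := by
      simpa [hTi, Prod.ext_iff, ZMod.natCast_eq_zero_iff] using hTisum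
    obtain rfl : b = 0 := Nat.eq_zero_of_dvd_of_lt hab.2 (by omega)
    have ha : a ≠ 0 := by rintro rfl; simp [hTi] at hTi0
    rw [hTi, replicate_zero, add_zero]
    exact replicate_le_replicate _ |>.mpr (Nat.le_of_dvd (Nat.pos_of_ne_zero ha) hab.1)
  have hcount : replicate (k * p) ((1, 0) : ZMod p × ZMod p) ≤
      replicate (k * p - 1) (1, 0) + replicate (p - 1) (0, 1) := calc
    _ = ∑ _i : Fin k, replicate p ((1, 0) : ZMod p × ZMod p) := by simp [nsmul_replicate]
    _ ≤ ∑ i, T i := Finset.sum_le_sum fun i _ => hle i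
    _ ≤ _ := hTS
  have := le_count_iff_replicate_le.mpr hcount
  simp only [count_add, count_replicate_self, count_replicate, Prod.mk.injEq, zero_ne_one,
    one_ne_zero, and_self, ↓reduceIte, add_zero] at this
  have := Nat.mul_pos hk (zero_lt_one.trans hp)
  omega

/-- The generalized Davenport constant: `D_k(C_p × C_p) = kp + p − 1`. Namely,
`kp + p − 1` is the least `t` such that every sequence over `C_p × C_p` of
length `≥ t` contains `k` nonempty pairwise disjoint zero-sum subsequences. -/
theorem generalized_davenport_CpCp (p k : ℕ) (hp : p.Prime) (hk : 0 < k) :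
    IsLeast {t : ℕ | ∀ S : Multiset (ZMod p × ZMod p), t ≤ Multiset.card S →
        ∃ T : Fin k → Multiset (ZMod p × ZMod p),
          (∑ i, T i) ≤ S ∧ ∀ i, T i ≠ 0 ∧ (T i).sum = 0}
      (k * p + p - 1) := by
  have := Fact.mk hp
  have hp2 := hp.two_le
  obtain ⟨k, rfl⟩ := Nat.exists_eq_add_one.mpr hk
  constructor
  · intro S hS
    rw [Nat.succ_mul] at hS
    exact hasDisjointZeroSums_of_card_le (D := 2 * p - 1) (n := p)
      exists_zero_sum_of_two_mul_sub_one_le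
      (fun S hS => exists_zero_sum_card_le_of_three_mul_sub_two_le S (by omega)) k S (by omega)
  · intro t ht
    by_contra! hlt
    refine not_hasDisjointZeroSums_replicate hp.one_lt hk (ht _ ?_)
    simp only [card_add, card_replicate]
    rw [Nat.succ_mul] at hlt ⊢
    omega
end
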